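/- arXiv:1112.1935 — 5 statements merged into one kernel-verified Lean document; each statement's English description precedes it below -/
import Mathlib

section
/- Let X be a compact metric space and let 𝒞 be a subset of NonemptyCompacts X that is closed with respect to the Hausdorff metric. Then 𝒞, equipped with the subspace topology of the Thurston topology on NonemptyCompacts X, is a compact topological space. -/
/-! A set closed for the Hausdorff metric on the compact space `NonemptyCompacts X` is compact.
Each subbasic set `U_V` of the Thurston topology is open for the Hausdorff metric, so the Thurston
topology is coarser and compactness passes to it. -/

open Topology TopologicalSpace

/-- The Thurston topology on the space of nonempty compact subsets of `X`:
the topology generated by the subbasis consisting of the sets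
`U_V = {K : nonempty compact | K ∩ V ≠ ∅}` for `V` open in `X`. -/
def thurstonTopNC (X : Type*) [MetricSpace X] :
    TopologicalSpace (NonemptyCompacts X) :=
  TopologicalSpace.generateFrom
    {U | ∃ V : Set X, IsOpen V ∧ U = {K : NonemptyCompacts X | ((K : Set X) ∩ V).Nonempty}}

theorem IsCompact.mono_topology {α : Type*} {t₁ t₂ : TopologicalSpace α} (h : t₁ ≤ t₂)
    {s : Set α} (hs : @IsCompact α t₁ s) : @IsCompact α t₂ s := by
  simpa using @IsCompact.image α α t₁ t₂ s id hs (continuous_id_of_le h)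

/- The Hausdorff-metric topology on `NonemptyCompacts X` is, by construction, Mathlib's Vietoris
topology, in which every `U_V` is open. -/
theorem hausdorff_le_thurstonTopNC (X : Type*) [MetricSpace X] :
    (inferInstance : TopologicalSpace (NonemptyCompacts X)) ≤ thurstonTopNC X :=
  le_generateFrom fun _ ⟨_, hV, hU⟩ => hU ▸ NonemptyCompacts.isOpen_inter_nonempty_of_isOpen hV

/-- If `X` is a compact metric space and `𝒞` is a subset of `NonemptyCompacts X` that is
closed for the Hausdorff metric, then `𝒞` with the subspace topology of the Thurston
topology is a compact topological space. -/
theorem thurston_compact_of_closed {X : Type*} [MetricSpace X] [CompactSpace X]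
    (𝒞 : Set (NonemptyCompacts X)) (h𝒞 : IsClosed 𝒞) :
    @CompactSpace 𝒞 (TopologicalSpace.induced (Subtype.val) (thurstonTopNC X)) :=
  (@isCompact_iff_compactSpace _ (thurstonTopNC X) 𝒞).mp
    (h𝒞.isCompact.mono_topology (hausdorff_le_thurstonTopNC X))
end

section
/- Let X be a topological space and 𝒞 a set of subsets of X equipped with the Thurston topology. For every A ∈ 𝒞, the set 𝒰(A) = {B ∈ 𝒞 : for every open V ⊆ X with V ∩ A ≠ ∅, also V ∩ B ≠ ∅} equals the intersection of all Thurston-open subsets of 𝒞 that contain A. -/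
open Topology

/-- The Thurston topology on a set `𝒞` of subsets of a topological space `X`:
the topology generated by the subbasis consisting of the sets
`U_V = {A ∈ 𝒞 : A ∩ V ≠ ∅}` for `V` open in `X`. -/
def thurstonTop {X : Type*} [TopologicalSpace X] (𝒞 : Set (Set X)) :
    TopologicalSpace 𝒞 :=
  TopologicalSpace.generateFrom
    {U | ∃ V : Set X, IsOpen V ∧ U = {A : 𝒞 | ((A : Set X) ∩ V).Nonempty}}

/-- For `A ∈ 𝒞`, the set `𝒰(A)` of elements `B ∈ 𝒞` that meet every open set
meeting `A`. -/
def thurstonU {X : Type*} [TopologicalSpace X] (𝒞 : Set (Set X)) (A : 𝒞) : Set 𝒞 :=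
  {B : 𝒞 | ∀ V : Set X, IsOpen V → (V ∩ (A : Set X)).Nonempty → (V ∩ (B : Set X)).Nonempty}

/-! Both sides describe the points `B` that specialize to `A`; in a topology generated by a
subbasis, specialization only has to be tested on the subbasic sets `U_V`, and `A ∈ U_V → B ∈ U_V`
is the defining condition of `𝒰(A)`. -/

theorem TopologicalSpace.specializes_generateFrom_iff {α : Type*} {g : Set (Set α)} {a b : α} :
    @Specializes α (generateFrom g) b a ↔ ∀ s ∈ g, a ∈ s → b ∈ s := by
  let _ := generateFrom g
  simp only [specializes_iff_pure, nhds_generateFrom, le_iInf_iff, Filter.le_principal_iff,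
    Filter.mem_pure, Set.mem_ofPred_eq, and_imp]
  exact forall_congr' fun _ => imp.swap

theorem mem_sInter_isOpen_mem_iff_specializes {α : Type*} [TopologicalSpace α] {a b : α} :
    b ∈ ⋂₀ {U : Set α | IsOpen U ∧ a ∈ U} ↔ b ⤳ a := by
  simp only [Set.mem_sInter, Set.mem_ofPred_eq, and_imp, specializes_iff_forall_open]

theorem mem_thurstonU_iff_specializes {X : Type*} [TopologicalSpace X] {𝒞 : Set (Set X)}
    {A B : 𝒞} : B ∈ thurstonU 𝒞 A ↔ @Specializes 𝒞 (thurstonTop 𝒞) B A := by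
  rw [thurstonTop, TopologicalSpace.specializes_generateFrom_iff]
  constructor
  · rintro hB _ ⟨V, hV, rfl⟩
    simpa only [Set.inter_comm, Set.mem_ofPred_eq] using hB V hV
  · intro h V hV
    simpa only [Set.inter_comm, Set.mem_ofPred_eq] using h _ ⟨V, hV, rfl⟩

/-- `𝒰(A)` equals the intersection of all Thurston-open subsets of `𝒞` containing `A`. -/
theorem thurstonU_eq_sInter_opens {X : Type*} [TopologicalSpace X]
    (𝒞 : Set (Set X)) (A : 𝒞) :
    thurstonU 𝒞 A = ⋂₀ {U : Set 𝒞 | IsOpen[thurstonTop 𝒞] U ∧ A ∈ U} := by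
  let _ := thurstonTop 𝒞
  ext B
  rw [mem_thurstonU_iff_specializes, mem_sInter_isOpen_mem_iff_specializes]
end

section
/- Let X be a topological space and 𝒞 a set of closed subsets of X equipped with the Thurston topology. Let f : 𝒞 → 𝒞 be a homeomorphism with respect to the Thurston topology. If A ∈ 𝒞 is minimal for inclusion in 𝒞 (i.e. there is no C ∈ 𝒞 with C ⊊ A), then f(A) is minimal for inclusion in 𝒞. -/
/-!
For closed members, the specialization preorder of the Thurston topology is reverse inclusion:
`A ⤳ C` iff `C ⊆ A`, because `{B | B ⊆ A}`, the complement of `U_{Aᶜ}`, is closed.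
A homeomorphism preserves specialization, so it is an order automorphism of `(𝒞, ⊆)` and
therefore preserves minimal elements.
-/

open Topology

theorem Set.isMin_iff_not_exists_ssubset {α : Type*} {𝒮 : Set (Set α)} {A : 𝒮} :
    IsMin A ↔ ¬ ∃ C : 𝒮, (C : Set α) ⊂ A := by
  simp [isMin_iff_forall_not_lt]

section

variable {X : Type*} [TopologicalSpace X] {𝒞 : Set (Set X)}

theorem thurstonTop_specializes_iff {A C : 𝒞} (hA : IsClosed (A : Set X)) :
    @Specializes 𝒞 (thurstonTop 𝒞) A C ↔ C ≤ A := by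
  let := thurstonTop 𝒞
  constructor
  · intro hAC
    by_contra hCA
    have hC : ((C : Set X) ∩ (A : Set X)ᶜ).Nonempty := Set.inter_compl_nonempty_iff.2 hCA
    have hopen : IsOpen {B : 𝒞 | ((B : Set X) ∩ (A : Set X)ᶜ).Nonempty} :=
      TopologicalSpace.isOpen_generateFrom_of_mem ⟨_, hA.isOpen_compl, rfl⟩
    obtain ⟨x, hxA, hxA'⟩ := specializes_iff_forall_open.1 hAC _ hopen hC
    exact hxA' hxA
  · intro hCA
    rw [specializes_iff_pure, ← Filter.tendsto_id']
    refine TopologicalSpace.tendsto_nhds_generateFrom_iff.2 ?_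
    rintro _ ⟨V, -, rfl⟩ hC
    exact hC.mono (Set.inter_subset_inter_left V hCA)

theorem thurstonTop_homeomorph_le_iff (hcl : ∀ C ∈ 𝒞, IsClosed C)
    (f : @Homeomorph 𝒞 𝒞 (thurstonTop 𝒞) (thurstonTop 𝒞)) {A C : 𝒞} :
    f C ≤ f A ↔ C ≤ A := by
  let := thurstonTop 𝒞
  rw [← thurstonTop_specializes_iff (hcl _ (f A).2), ← thurstonTop_specializes_iff (hcl _ A.2),
    f.isInducing.specializes_iff]

def Homeomorph.thurstonTopOrderIso (hcl : ∀ C ∈ 𝒞, IsClosed C)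
    (f : @Homeomorph 𝒞 𝒞 (thurstonTop 𝒞) (thurstonTop 𝒞)) : 𝒞 ≃o 𝒞 where
  toEquiv := @Homeomorph.toEquiv _ _ (thurstonTop 𝒞) (thurstonTop 𝒞) f
  map_rel_iff' := thurstonTop_homeomorph_le_iff hcl f

end

/-- A homeomorphism of a set `𝒞` of closed subsets of `X` with respect to the Thurston
topology sends elements that are minimal for inclusion to elements that are minimal
for inclusion. -/
theorem homeomorph_minimal {X : Type*} [TopologicalSpace X]
    (𝒞 : Set (Set X)) (hcl : ∀ C ∈ 𝒞, IsClosed C)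
    (f : @Homeomorph 𝒞 𝒞 (thurstonTop 𝒞) (thurstonTop 𝒞))
    (A : 𝒞) (hA : ¬ ∃ C : 𝒞, (C : Set X) ⊂ (A : Set X)) :
    ¬ ∃ C : 𝒞, (C : Set X) ⊂ (f A : Set X) := by
  rw [← Set.isMin_iff_not_exists_ssubset] at hA ⊢
  exact (f.thurstonTopOrderIso hcl).isMin_apply.2 hA
end

section
/- Let X be a topological space and 𝒞 a set of closed subsets of X equipped with the Thurston topology, and let f : 𝒞 → 𝒞 be a homeomorphism with respect to the Thurston topology. For A ∈ 𝒞 define length(A) ∈ ℕ∞ as the supremum of all n for which there exists a chain A = A₀ ⊋ A₁ ⊋ ⋯ ⊋ A_n with every A_i ∈ 𝒞. Then for every A ∈ 𝒞, the image under f of any such chain of length n below A is a chain of length n below f(A), and length(A) = length(f(A)). -/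
open Topology

/-- A chain of length `n` below `A` in `𝒞`: a sequence
`A = A₀ ⊋ A₁ ⊋ ⋯ ⊋ A_n` of elements of `𝒞`. -/
def IsChainBelow {X : Type*} [TopologicalSpace X] (𝒞 : Set (Set X)) (A : 𝒞)
    (n : ℕ) (c : Fin (n + 1) → 𝒞) : Prop :=
  c 0 = A ∧ ∀ i : Fin n, (c i.succ : Set X) ⊂ (c i.castSucc : Set X)

/-- The length of `A ∈ 𝒞`: the supremum in `ℕ∞` of the lengths of chains
`A = A₀ ⊋ A₁ ⊋ ⋯ ⊋ A_n` of elements of `𝒞`. -/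
noncomputable def chainLength {X : Type*} [TopologicalSpace X] (𝒞 : Set (Set X))
    (A : 𝒞) : ℕ∞ :=
  ⨆ n ∈ {n : ℕ | ∃ c : Fin (n + 1) → 𝒞, IsChainBelow 𝒞 A n c}, (n : ℕ∞)

/-!
In the Thurston topology, `B ⤳ A` holds exactly when `A ⊆ B` as soon as `B` is closed: every
subbasic open set meeting `A` meets `B`, and conversely the open set of members meeting the
complement of `B` contains `A` but not `B`. A homeomorphism preserves specialization, so on a
family of closed sets it preserves inclusion in both directions; it therefore maps chains to
chains of the same length, and so does its inverse, whence the lengths agree.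
-/

section ThurstonTop

variable {X : Type*} [TopologicalSpace X] {𝒞 : Set (Set X)}

attribute [local instance] thurstonTop

theorem isOpen_thurstonTop_inter_nonempty {V : Set X} (hV : IsOpen V) :
    IsOpen {A : 𝒞 | ((A : Set X) ∩ V).Nonempty} :=
  TopologicalSpace.isOpen_generateFrom_of_mem ⟨V, hV, rfl⟩

theorem thurstonTop_specializes_of_subset {A B : 𝒞} (h : (A : Set X) ⊆ B) :
    B ⤳ A := by
  rw [specializes_iff_nhds, thurstonTop, TopologicalSpace.nhds_generateFrom (a := A)]
  refine le_iInf₂ fun U hU => Filter.le_principal_iff.2 ?_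
  obtain ⟨hAU, V, hV, rfl⟩ := hU
  obtain ⟨x, hxA, hxV⟩ := hAU
  exact (isOpen_thurstonTop_inter_nonempty hV).mem_nhds ⟨x, h hxA, hxV⟩

theorem subset_of_thurstonTop_specializes {A B : 𝒞} (hB : IsClosed (B : Set X))
    (h : B ⤳ A) : (A : Set X) ⊆ B := by
  by_contra hAB
  obtain ⟨x, hxB, hxBc⟩ := h.mem_open (isOpen_thurstonTop_inter_nonempty hB.isOpen_compl)
    (Set.inter_compl_nonempty_iff.2 hAB)
  exact hxBc hxB

theorem thurstonTop_specializes_iff_s11 {A B : 𝒞} (hB : IsClosed (B : Set X)) :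
    B ⤳ A ↔ (A : Set X) ⊆ B :=
  ⟨subset_of_thurstonTop_specializes hB, thurstonTop_specializes_of_subset⟩

theorem thurstonTop_homeomorph_subset_iff (hcl : ∀ C ∈ 𝒞, IsClosed C)
    (f : 𝒞 ≃ₜ 𝒞) (A B : 𝒞) :
    (f A : Set X) ⊆ f B ↔ (A : Set X) ⊆ B := by
  rw [← thurstonTop_specializes_iff_s11 (hcl _ (f B).2), ← thurstonTop_specializes_iff_s11 (hcl _ B.2),
    f.isInducing.specializes_iff]

theorem thurstonTop_homeomorph_ssubset_iff (hcl : ∀ C ∈ 𝒞, IsClosed C)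
    (f : 𝒞 ≃ₜ 𝒞) (A B : 𝒞) :
    (f A : Set X) ⊂ f B ↔ (A : Set X) ⊂ B := by
  simp only [ssubset_iff_subset_not_subset, thurstonTop_homeomorph_subset_iff hcl f]

end ThurstonTop

section ChainLength

variable {X : Type*} [TopologicalSpace X] {𝒞 : Set (Set X)} {f : 𝒞 → 𝒞}

theorem IsChainBelow.map (hf : ∀ A B : 𝒞, (A : Set X) ⊂ B → (f A : Set X) ⊂ f B) {A : 𝒞}
    {n : ℕ} {c : Fin (n + 1) → 𝒞} (hc : IsChainBelow 𝒞 A n c) :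
    IsChainBelow 𝒞 (f A) n (fun i => f (c i)) :=
  ⟨congrArg f hc.1, fun i => hf _ _ (hc.2 i)⟩

theorem chainLength_le_chainLength_map
    (hf : ∀ A B : 𝒞, (A : Set X) ⊂ B → (f A : Set X) ⊂ f B) (A : 𝒞) :
    chainLength 𝒞 A ≤ chainLength 𝒞 (f A) :=
  iSup₂_le fun n ⟨_, hc⟩ => le_iSup₂_of_le n ⟨_, hc.map hf⟩ le_rfl

end ChainLength

/-- A homeomorphism `f` of a set `𝒞` of closed subsets of `X` with respect to the
Thurston topology maps any chain of length `n` below `A` to a chain of length `n`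
below `f(A)`, and preserves the length: `length(A) = length(f(A))`. -/
theorem homeomorph_chainLength {X : Type*} [TopologicalSpace X]
    (𝒞 : Set (Set X)) (hcl : ∀ C ∈ 𝒞, IsClosed C)
    (f : @Homeomorph 𝒞 𝒞 (thurstonTop 𝒞) (thurstonTop 𝒞)) (A : 𝒞) :
    (∀ (n : ℕ) (c : Fin (n + 1) → 𝒞), IsChainBelow 𝒞 A n c →
      IsChainBelow 𝒞 (f A) n (fun i => f (c i))) ∧
    chainLength 𝒞 A = chainLength 𝒞 (f A) := by
  let _ : TopologicalSpace 𝒞 := thurstonTop 𝒞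
  have hf := fun B C => (thurstonTop_homeomorph_ssubset_iff hcl f B C).2
  have hf_symm := fun B C => (thurstonTop_homeomorph_ssubset_iff hcl f.symm B C).2
  refine ⟨fun n c hc => hc.map hf, le_antisymm (chainLength_le_chainLength_map hf A) ?_⟩
  simpa using chainLength_le_chainLength_map hf_symm (f A)
end

section
/- Let X be a metric space, let (K_n) be a sequence of nonempty compact subsets of X, and let K and K' be nonempty compact subsets of X. Assume (1) the Hausdorff distance d_H(K_n, K) tends to 0 as n → ∞, and (2) for every open set V ⊆ X with V ∩ K' ≠ ∅ there exists N such that V ∩ K_n ≠ ∅ for all n ≥ N (i.e. K_n converges to K' in the Thurston topology). Then K' ⊆ K. -/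
/-!
Every small ball around a point `x ∈ L'` eventually meets `K n`, and every point of `K n` is
within `d_H(K n, L) → 0` of `L`; hence `x` is in the closure of `L`, which is `L`.
-/

open Metric Filter Topology

theorem mem_closure_of_frequently_ball_inter_nonempty {X ι : Type*} [PseudoMetricSpace X]
    {l : Filter ι} {K : ι → Set X} {L : Set X} {x : X}
    (hK : ∀ i, Bornology.IsBounded (K i)) (hL : Bornology.IsBounded L) (hLne : L.Nonempty)
    (hKL : Tendsto (fun i => hausdorffDist (K i) L) l (𝓝 0))
    (hx : ∀ ε > 0, ∃ᶠ i in l, (ball x ε ∩ K i).Nonempty) :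
    x ∈ closure L := by
  refine Metric.mem_closure_iff.2 fun ε hε => ?_
  obtain ⟨i, ⟨y, hyx, hyK⟩, hKLi⟩ :=
    ((hx (ε / 2) (half_pos hε)).and_eventually
      (hKL.eventually (gt_mem_nhds (half_pos hε)))).exists
  obtain ⟨z, hzL, hyz⟩ := exists_dist_lt_of_hausdorffDist_lt hyK hKLi
    (hausdorffEDist_ne_top_of_nonempty_of_bounded ⟨y, hyK⟩ hLne (hK i) hL)
  refine ⟨z, hzL, ?_⟩
  calc dist x z ≤ dist x y + dist y z := dist_triangle x y z
    _ < ε / 2 + ε / 2 := add_lt_add (mem_ball'.1 hyx) hyz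
    _ = ε := add_halves ε

theorem thurston_limit_subset_hausdorff_limit_general {X : Type*} [MetricSpace X]
    (K : ℕ → Set X) (L L' : Set X)
    (hKc : ∀ n, IsCompact (K n))
    (hLc : IsCompact L) (hLne : L.Nonempty)
    (h1 : Tendsto (fun n => hausdorffDist (K n) L) atTop (nhds 0))
    (h2 : ∀ V : Set X, IsOpen V → (V ∩ L').Nonempty →
      ∃ N : ℕ, ∀ n ≥ N, (V ∩ K n).Nonempty) :
    L' ⊆ L := by
  intro x hx
  refine hLc.isClosed.closure_subset <| mem_closure_of_frequently_ball_inter_nonempty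
    (fun n => (hKc n).isBounded) hLc.isBounded hLne h1 fun ε hε => ?_
  obtain ⟨N, hN⟩ := h2 (ball x ε) isOpen_ball ⟨x, mem_ball_self hε, hx⟩
  exact (eventually_atTop.2 ⟨N, hN⟩).frequently

/-- Let `(K n)` be a sequence of nonempty compact subsets of a metric space `X` and let
`L`, `L'` be nonempty compact subsets. If `d_H(K n, L) → 0` and `(K n)` converges to `L'`
in the Thurston topology (every open set meeting `L'` eventually meets `K n`),
then `L' ⊆ L`. -/
theorem thurston_limit_subset_hausdorff_limit {X : Type*} [MetricSpace X]
    (K : ℕ → Set X) (L L' : Set X)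
    (hKc : ∀ n, IsCompact (K n)) (hKne : ∀ n, (K n).Nonempty)
    (hLc : IsCompact L) (hLne : L.Nonempty)
    (hL'c : IsCompact L') (hL'ne : L'.Nonempty)
    (h1 : Tendsto (fun n => hausdorffDist (K n) L) atTop (nhds 0))
    (h2 : ∀ V : Set X, IsOpen V → (V ∩ L').Nonempty →
      ∃ N : ℕ, ∀ n ≥ N, (V ∩ K n).Nonempty) :
    L' ⊆ L :=
  thurston_limit_subset_hausdorff_limit_general K L L' hKc hLc hLne h1 h2
end
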